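/- Let f be holomorphic on a sector A = {re^{iθ} : r > r₀, |θ − π| ≤ π/2 − ε} and suppose |f′(z)|/(1+|f(z)|²) ≤ (1/2)e^{−k|z|} on A for some k > 0. Then f has a limit a ∈ Ĉ as z → ∞ in A in the spherical metric, and the spherical distance from a to f(z) is at most (1/k)e^{−k r₀} for z ∈ A (suitably interpreted along radial paths). -/

import Mathlib

open Real Complex

/-- The chordal (spherical) metric on the Riemann sphere, modelled as `Option ℂ`
with `none` as the point at infinity. -/
noncomputable def sphChordal (a b : Option ℂ) : ℝ :=
  Option.elim a
    (Option.elim b 0 fun w => 2 / Real.sqrt (1 + ‖w‖ ^ 2))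
    (fun z => Option.elim b (2 / Real.sqrt (1 + ‖z‖ ^ 2)) fun w =>
      2 * ‖z - w‖ /
        (Real.sqrt (1 + ‖z‖ ^ 2) * Real.sqrt (1 + ‖w‖ ^ 2)))

open Filter Topology

/-!
Everything is pulled back to the unit sphere of `ℂ × ℝ` by the inverse stereographic
projection `invStereo`, which turns the chordal metric into the Euclidean distance and
stretches tangent vectors at `w` by exactly `2 / (1 + ‖w‖ ^ 2)`. Along a path `γ` in the open
sector, `invStereo ∘ f ∘ γ` therefore moves with speed at most `2 f^#(γ) ‖γ'‖`. On a ray this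
integrates to `e^{-kr} / k` beyond radius `r`, so the values along each ray converge in the
complete space `ℂ × ℝ`; on the arc of radius `R` it gives at most `π R e^{-kR} → 0`, so all
rays share one limit, a unit vector and hence a point of the Riemann sphere. The bound reaches
the two boundary rays, where `deriv f` carries no information, by continuity of `f`.
-/

lemma norm_toLp_sq {E : Type*} [SeminormedAddCommGroup E] (x : E) (s : ℝ) :
    ‖WithLp.toLp 2 (x, s)‖ ^ 2 = ‖x‖ ^ 2 + s ^ 2 := by
  rw [WithLp.prod_norm_sq_eq_of_L2, Real.norm_eq_abs, sq_abs]; rfl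

section Stereographic

variable {E : Type*} [NormedAddCommGroup E] [InnerProductSpace ℝ E]

noncomputable def invStereo (w : E) : WithLp 2 (E × ℝ) :=
  WithLp.toLp 2 ((2 / (1 + ‖w‖ ^ 2)) • w, (‖w‖ ^ 2 - 1) / (‖w‖ ^ 2 + 1))

noncomputable def northPole : WithLp 2 (E × ℝ) := WithLp.toLp 2 (0, 1)

lemma norm_invStereo (w : E) : ‖invStereo w‖ = 1 := by
  have h : 0 < 1 + ‖w‖ ^ 2 := by positivity
  rw [← sq_eq_sq₀ (norm_nonneg _) zero_le_one, one_pow, invStereo, norm_toLp_sq, norm_smul,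
    Real.norm_of_nonneg (by positivity)]
  field_simp
  ring

lemma norm_invStereo_sub_invStereo (p q : E) :
    ‖invStereo p - invStereo q‖ =
      2 * ‖p - q‖ / (√(1 + ‖p‖ ^ 2) * √(1 + ‖q‖ ^ 2)) := by
  have hp : 0 < 1 + ‖p‖ ^ 2 := by positivity
  have hq : 0 < 1 + ‖q‖ ^ 2 := by positivity
  rw [← sq_eq_sq₀ (norm_nonneg _) (by positivity), invStereo, invStereo, ← WithLp.toLp_sub,
    Prod.mk_sub_mk, norm_toLp_sq, div_pow, mul_pow, mul_pow, norm_sub_sq_real, norm_sub_sq_real,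
    sq_sqrt hp.le, sq_sqrt hq.le, norm_smul, norm_smul, real_inner_smul_left,
    real_inner_smul_right, Real.norm_of_nonneg (by positivity),
    Real.norm_of_nonneg (by positivity)]
  field_simp
  ring

lemma norm_northPole_sub_invStereo (q : E) :
    ‖northPole - invStereo q‖ = 2 / √(1 + ‖q‖ ^ 2) := by
  have hq : 0 < 1 + ‖q‖ ^ 2 := by positivity
  rw [← sq_eq_sq₀ (norm_nonneg _) (by positivity), northPole, invStereo, ← WithLp.toLp_sub,
    Prod.mk_sub_mk, norm_toLp_sq, zero_sub, norm_neg, div_pow, sq_sqrt hq.le, norm_smul,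
    Real.norm_of_nonneg (by positivity)]
  field_simp
  ring

lemma exists_invStereo_eq {x : WithLp 2 (E × ℝ)} (hx : ‖x‖ = 1) (hxn : x ≠ northPole) :
    ∃ w, invStereo w = x := by
  obtain ⟨⟨v, s⟩⟩ := x
  have hvs : ‖v‖ ^ 2 + s ^ 2 = 1 := by rw [← norm_toLp_sq, hx, one_pow]
  have hs : s ≠ 1 := by
    rintro rfl
    exact hxn (by simpa [northPole] using hvs)
  have hs' : 0 < 1 - s := sub_pos.2 (lt_of_le_of_ne (by nlinarith [sq_nonneg ‖v‖]) hs)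
  refine ⟨(1 - s)⁻¹ • v, ?_⟩
  have hw : ‖(1 - s)⁻¹ • v‖ ^ 2 = (1 + s) / (1 - s) := by
    rw [norm_smul, mul_pow, norm_inv, Real.norm_of_nonneg hs'.le]
    field_simp
    nlinarith
  rw [invStereo, hw, smul_smul]
  congr 2
  · rw [show 2 / (1 + (1 + s) / (1 - s)) * (1 - s)⁻¹ = (1 : ℝ) by field_simp; ring, one_smul]
  · field_simp; ring

lemma differentiable_invStereo : Differentiable ℝ (invStereo : E → WithLp 2 (E × ℝ)) := by
  refine (WithLp.prodContinuousLinearEquiv 2 ℝ E ℝ).symm.differentiable.comp fun w => ?_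
  have hn : DifferentiableAt ℝ (fun w : E => ‖w‖ ^ 2) w := differentiableAt_id.norm_sq ℝ
  have h1 : 1 + ‖w‖ ^ 2 ≠ 0 := by positivity
  have h2 : ‖w‖ ^ 2 + 1 ≠ 0 := by positivity
  refine DifferentiableAt.prodMk (DifferentiableAt.smul ?_ differentiableAt_id) ?_ <;>
    simp only [div_eq_mul_inv]
  · exact ((hn.const_add 1).inv h1).const_mul 2
  · exact (hn.sub_const 1).mul ((hn.add_const 1).inv h2)

lemma norm_fderiv_invStereo_apply (w h : E) :
    ‖fderiv ℝ invStereo w h‖ = 2 * ‖h‖ / (1 + ‖w‖ ^ 2) := by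
  have hline : HasDerivAt (fun t : ℝ => invStereo (w + t • h)) (fderiv ℝ invStereo w h) 0 := by
    have hl : HasDerivAt (fun t : ℝ => w + t • h) h 0 := by
      simpa using ((hasDerivAt_id (0 : ℝ)).smul_const h).const_add w
    exact (differentiable_invStereo w).hasFDerivAt.comp_hasDerivAt_of_eq 0 hl (by simp)
  -- `φ t` is the norm of the difference quotient at `t ≠ 0`, by the chordal formula.
  set φ : ℝ → ℝ := fun t => 2 * ‖h‖ / (√(1 + ‖w + t • h‖ ^ 2) * √(1 + ‖w‖ ^ 2))
  have hφ : Tendsto φ (𝓝[≠] 0) (𝓝 (2 * ‖h‖ / (1 + ‖w‖ ^ 2))) := by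
    have hc : ContinuousAt φ 0 := by
      refine continuousAt_const.div (ContinuousAt.mul ?_ continuousAt_const) (by positivity)
      fun_prop
    convert hc.tendsto.mono_left nhdsWithin_le_nhds using 2
    simp [φ, Real.mul_self_sqrt (by positivity : (0:ℝ) ≤ 1 + ‖w‖ ^ 2)]
  refine tendsto_nhds_unique (hline.tendsto_slope_zero.norm) (hφ.congr' ?_)
  filter_upwards [self_mem_nhdsWithin] with t ht
  simp only [φ, zero_add, zero_smul, add_zero, norm_smul, norm_invStereo_sub_invStereo,
    add_sub_cancel_left, norm_inv, Real.norm_eq_abs]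
  field_simp [abs_ne_zero.2 ht]

noncomputable def sphEmbed (a : Option E) : WithLp 2 (E × ℝ) := a.elim northPole invStereo

lemma exists_sphEmbed_eq {x : WithLp 2 (E × ℝ)} (hx : ‖x‖ = 1) :
    ∃ a : Option E, sphEmbed a = x := by
  by_cases hxn : x = northPole
  · exact ⟨none, hxn.symm⟩
  · obtain ⟨w, hw⟩ := exists_invStereo_eq hx hxn
    exact ⟨some w, hw⟩

end Stereographic

lemma sphChordal_eq_norm_sub (a b : Option ℂ) :
    sphChordal a b = ‖sphEmbed a - sphEmbed b‖ := by
  rcases a with _ | z <;> rcases b with _ | w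
  · simp [sphChordal, sphEmbed]
  · exact (norm_northPole_sub_invStereo w).symm
  · exact (norm_sub_rev _ _).trans (norm_northPole_sub_invStereo z) |>.symm
  · exact (norm_invStereo_sub_invStereo z w).symm

lemma continuous_sphChordal_some (a : Option ℂ) :
    Continuous fun w : ℂ => sphChordal a (some w) := by
  simp_rw [sphChordal_eq_norm_sub]
  exact (continuous_const.sub differentiable_invStereo.continuous).norm

lemma cauchySeq_of_eventually_norm_sub_le {ι X : Type*} [SemilatticeSup ι] [Nonempty ι]
    [SeminormedAddCommGroup X] {G : ι → X} {b : ι → ℝ} (hb : Tendsto b atTop (𝓝 0))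
    (hG : ∀ᶠ r in atTop, ∀ R, r ≤ R → ‖G R - G r‖ ≤ b r) : CauchySeq G :=
  Metric.cauchySeq_iff'.2 fun ε hε => (hG.and (hb.eventually (gt_mem_nhds hε))).exists.imp
    fun N hN n hn => by rw [dist_eq_norm]; exact (hN.1 n hn).trans_lt hN.2

noncomputable def sphericalDeriv (f : ℂ → ℂ) (z : ℂ) : ℝ := ‖deriv f z‖ / (1 + ‖f z‖ ^ 2)

lemma norm_invStereo_comp_sub_le {f : ℂ → ℂ} {γ γ' : ℝ → ℂ} {B B' : ℝ → ℝ} {a b : ℝ}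
    (hab : a ≤ b) (hγ : ∀ t ∈ Set.Icc a b, HasDerivAt γ (γ' t) t)
    (hf : ∀ t ∈ Set.Icc a b, DifferentiableAt ℂ f (γ t)) (hB : ∀ t, HasDerivAt B (B' t) t)
    (hbound : ∀ t ∈ Set.Icc a b, 2 * sphericalDeriv f (γ t) * ‖γ' t‖ ≤ B' t) :
    ‖invStereo (f (γ b)) - invStereo (f (γ a))‖ ≤ B b - B a := by
  have hderiv : ∀ t ∈ Set.Icc a b,
      HasDerivAt (fun s => invStereo (f (γ s)) - invStereo (f (γ a)))
        (fderiv ℝ invStereo (f (γ t)) (deriv f (γ t) * γ' t)) t := fun t ht =>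
    ((differentiable_invStereo _).hasFDerivAt.comp_hasDerivAt t
      ((hf t ht).hasDerivAt.comp t (hγ t ht))).sub_const _
  refine image_norm_le_of_norm_deriv_right_le_deriv_boundary
    (f := fun s => invStereo (f (γ s)) - invStereo (f (γ a))) (B := fun s => B s - B a)
    (fun t ht => (hderiv t ht).continuousAt.continuousWithinAt)
    (fun t ht => (hderiv t (Set.Ico_subset_Icc_self ht)).hasDerivWithinAt)
    (by simp) (fun t => (hB t).sub_const _) (fun t ht => ?_) (Set.right_mem_Icc.2 hab)
  calc ‖fderiv ℝ invStereo (f (γ t)) (deriv f (γ t) * γ' t)‖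
      = 2 * sphericalDeriv f (γ t) * ‖γ' t‖ := by
        rw [norm_fderiv_invStereo_apply, norm_mul, sphericalDeriv]; ring
    _ ≤ B' t := hbound t (Set.Ico_subset_Icc_self ht)

lemma norm_ofReal_mul_exp_mul_I {r : ℝ} (hr : 0 ≤ r) (θ : ℝ) :
    ‖(r : ℂ) * exp (θ * I)‖ = r := by
  rw [norm_mul, norm_exp_ofReal_mul_I, mul_one, Complex.norm_of_nonneg hr]

def SphericalDecayOnSector (f : ℂ → ℂ) (r₀ c k : ℝ) : Prop :=
  ∀ r θ : ℝ, r₀ < r → |θ - π| < c →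
    DifferentiableAt ℂ f (r * exp (θ * I)) ∧
      2 * sphericalDeriv f (r * exp (θ * I)) ≤ Real.exp (-k * r)

section SphericalDecayOnSector

variable {f : ℂ → ℂ} {r₀ c k : ℝ}

lemma SphericalDecayOnSector.norm_radial_sub_le (hf : SphericalDecayOnSector f r₀ c k) (hk : k ≠ 0)
    {θ r R : ℝ} (hθ : |θ - π| < c) (hr : r₀ < r) (hrR : r ≤ R) :
    ‖invStereo (f (R * exp (θ * I))) - invStereo (f (r * exp (θ * I)))‖ ≤
      (Real.exp (-k * r) - Real.exp (-k * R)) / k := by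
  have hB : ∀ t : ℝ, HasDerivAt (fun t => -Real.exp (-k * t) / k) (Real.exp (-k * t)) t := by
    intro t
    exact (((hasDerivAt_id' t).const_mul (-k)).exp.neg.div_const k).congr_deriv (by field_simp)
  have hγ : ∀ t : ℝ, HasDerivAt (fun t : ℝ => (t : ℂ) * exp (θ * I)) (exp (θ * I)) t := by
    intro t
    simpa using (hasDerivAt_id t).ofReal_comp.mul_const (exp (θ * I))
  convert norm_invStereo_comp_sub_le hrR (fun t _ => hγ t)
    (fun t ht => (hf t θ (hr.trans_le ht.1) hθ).1) hB (fun t ht => ?_) using 1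
  · ring
  · rw [norm_exp_ofReal_mul_I, mul_one]
    exact (hf t θ (hr.trans_le ht.1) hθ).2

lemma SphericalDecayOnSector.norm_arc_sub_le (hf : SphericalDecayOnSector f r₀ c k)
    {θ R : ℝ} (hθ : |θ - π| < c) (hR : r₀ < R) (hR₀ : 0 ≤ R) :
    ‖invStereo (f (R * exp (θ * I))) - invStereo (f (R * exp (π * I)))‖ ≤
      R * |θ - π| * Real.exp (-k * R) := by
  set ψ : ℝ → ℝ := fun s => π + s * (θ - π)
  have hψ : ∀ s ∈ Set.Icc (0 : ℝ) 1, |ψ s - π| < c := by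
    intro s hs
    rw [add_sub_cancel_left, abs_mul, abs_of_nonneg hs.1]
    nlinarith [abs_nonneg (θ - π), hs.2]
  have hγ : ∀ s : ℝ, HasDerivAt (fun s : ℝ => (R : ℂ) * exp (ψ s * I))
      (R * (exp (ψ s * I) * ((θ - π : ℝ) * I))) s := by
    intro s
    have := ((((hasDerivAt_id s).mul_const (θ - π)).const_add π).ofReal_comp.mul_const I).cexp
    simpa [ψ] using this.const_mul (R : ℂ)
  have hB : ∀ s : ℝ, HasDerivAt (fun s => R * |θ - π| * Real.exp (-k * R) * s)
      (R * |θ - π| * Real.exp (-k * R)) s := fun s => by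
    simpa using (hasDerivAt_id s).const_mul (R * |θ - π| * Real.exp (-k * R))
  convert norm_invStereo_comp_sub_le zero_le_one (fun s _ => hγ s)
    (fun s hs => (hf R _ hR (hψ s hs)).1) hB (fun s hs => ?_) using 1
  · simp [ψ]
  · ring
  · rw [norm_mul, norm_mul, norm_exp_ofReal_mul_I, norm_mul, Complex.norm_I, Complex.norm_real,
      Complex.norm_real, Real.norm_of_nonneg hR₀, Real.norm_eq_abs]
    have := (hf R _ hR (hψ s hs)).2
    have : 0 ≤ R * |θ - π| := by positivity
    nlinarith

lemma SphericalDecayOnSector.exists_sphChordal_le (hf : SphericalDecayOnSector f r₀ c k)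
    (hk : 0 < k) (hc : 0 < c) (hr₀ : 0 ≤ r₀) :
    ∃ a : Option ℂ, ∀ r θ : ℝ, r₀ < r → |θ - π| < c →
      sphChordal a (some (f (r * exp (θ * I)))) ≤ Real.exp (-k * r) / k := by
  set G : ℝ → ℝ → WithLp 2 (ℂ × ℝ) := fun θ r => invStereo (f (r * exp (θ * I)))
  have hray : ∀ θ, |θ - π| < c → ∀ r, r₀ < r → ∀ R, r ≤ R →
      ‖G θ R - G θ r‖ ≤ Real.exp (-k * r) / k := by
    intro θ hθ r hr R hrR
    refine (hf.norm_radial_sub_le hk.ne' hθ hr hrR).trans ?_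
    gcongr
    linarith [Real.exp_pos (-k * R)]
  have hexp : Tendsto (fun R => Real.exp (-k * R)) atTop (𝓝 0) := by
    simpa using tendsto_rpow_mul_exp_neg_mul_atTop_nhds_zero 0 k hk
  have hπ : |π - π| < c := by simpa using hc
  obtain ⟨P, hP⟩ := cauchySeq_tendsto_of_complete <| cauchySeq_of_eventually_norm_sub_le
    (by simpa using hexp.div_const k) ((eventually_gt_atTop r₀).mono (hray π hπ))
  have hlim : ∀ θ, |θ - π| < c → Tendsto (G θ) atTop (𝓝 P) := by
    intro θ hθ
    have harc : Tendsto (fun R => R * |θ - π| * Real.exp (-k * R)) atTop (𝓝 0) := by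
      simpa [mul_right_comm] using
        (tendsto_rpow_mul_exp_neg_mul_atTop_nhds_zero 1 k hk).mul_const |θ - π|
    refine hP.congr_dist (squeeze_zero' (.of_forall fun _ => dist_nonneg) ?_ harc)
    filter_upwards [eventually_gt_atTop r₀] with R hR
    rw [dist_comm, dist_eq_norm]
    exact hf.norm_arc_sub_le hθ hR (hr₀.trans hR.le)
  obtain ⟨a, rfl⟩ := exists_sphEmbed_eq (mem_sphere_zero_iff_norm.1 <|
    Metric.isClosed_sphere.mem_of_tendsto hP (.of_forall fun r => by simp [G, norm_invStereo]))
  refine ⟨a, fun r θ hr hθ => ?_⟩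
  rw [sphChordal_eq_norm_sub]
  exact le_of_tendsto ((hlim θ hθ).sub_const _).norm
    ((eventually_ge_atTop r).mono (hray θ hθ r hr))

end SphericalDecayOnSector

def negAxisSector (r₀ c : ℝ) : Set ℂ :=
  {z | ∃ r θ : ℝ, r > r₀ ∧ |θ - π| ≤ c ∧ z = r * exp (θ * I)}

lemma negAxisSector_mem_nhds {r₀ c r θ : ℝ} (hr₀ : 0 ≤ r₀) (hc : c ≤ π) (hr : r₀ < r)
    (hθ : |θ - π| < c) : negAxisSector r₀ c ∈ 𝓝 ((r : ℂ) * exp (θ * I)) := by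
  have hr0 : 0 < r := hr₀.trans_lt hr
  -- the open cone `U` contains `r e^{iθ}` and lies in the sector
  set U : Set ℂ := {w | r₀ < ‖w‖ ∧ ‖w‖ * Real.cos c < -w.re}
  have hU : IsOpen U := (isOpen_lt continuous_const continuous_norm).inter
    (isOpen_lt (continuous_norm.mul continuous_const) continuous_re.neg)
  refine Filter.mem_of_superset (hU.mem_nhds ⟨?_, ?_⟩) ?_
  · rwa [norm_ofReal_mul_exp_mul_I hr0.le]
  · have hcos : Real.cos c < Real.cos (θ - π) := by
      rw [← Real.cos_abs (θ - π)]
      exact cos_lt_cos_of_nonneg_of_le_pi (abs_nonneg _) hc hθ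
    rw [Real.cos_sub_pi] at hcos
    rw [norm_ofReal_mul_exp_mul_I hr0.le, re_ofReal_mul, exp_ofReal_mul_I_re]
    nlinarith
  · rintro w ⟨hw, hwc⟩
    have hw0 : w ≠ 0 := by
      rintro rfl
      simp only [norm_zero] at hw
      linarith
    refine ⟨‖w‖, arg (-w) + π, hw, ?_, ?_⟩
    · rw [add_sub_cancel_right]
      by_contra! h
      have hcos := cos_lt_cos_of_nonneg_of_le_pi ((abs_nonneg _).trans hθ.le) (abs_arg_le_pi _) h
      rw [Real.cos_abs, cos_arg (neg_ne_zero.2 hw0), norm_neg, neg_re,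
        div_lt_iff₀ (norm_pos_iff.2 hw0)] at hcos
      linarith
    · push_cast
      rw [add_mul, Complex.exp_add, exp_pi_mul_I, ← norm_neg w, mul_neg_one, mul_neg,
        norm_mul_exp_arg_mul_I, neg_neg]

lemma mem_closure_image_arc {c : ℝ} (hc : 0 < c) (r : ℝ) {θ : ℝ} (hθ : |θ - π| ≤ c) :
    (r : ℂ) * exp (θ * I) ∈
      closure ((fun ψ : ℝ => (r : ℂ) * exp (ψ * I)) '' {ψ | |ψ - π| < c}) := by
  have hball : {ψ : ℝ | |ψ - π| < c} = Metric.ball π c := by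
    ext
    simp [Real.dist_eq]
  refine image_closure_subset_closure_image (by fun_prop) ⟨θ, ?_, rfl⟩
  rw [hball, closure_ball _ hc.ne']
  simpa [Real.dist_eq] using hθ

lemma sphericalDecayOnSector_of_differentiableOn {f : ℂ → ℂ} {r₀ c k : ℝ} (hr₀ : 0 ≤ r₀)
    (hc : c ≤ π) (hf : DifferentiableOn ℂ f (negAxisSector r₀ c))
    (hdecay : ∀ z ∈ negAxisSector r₀ c, sphericalDeriv f z ≤ 1 / 2 * Real.exp (-k * ‖z‖)) :
    SphericalDecayOnSector f r₀ c k := by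
  intro r θ hr hθ
  have hz : (r : ℂ) * exp (θ * I) ∈ negAxisSector r₀ c := ⟨r, θ, hr, hθ.le, rfl⟩
  refine ⟨(hf _ hz).differentiableAt (negAxisSector_mem_nhds hr₀ hc hr hθ), ?_⟩
  have := hdecay _ hz
  rw [norm_ofReal_mul_exp_mul_I (hr₀.trans hr.le)] at this
  linarith

lemma ContinuousOn.sphChordal_polar_le {f : ℂ → ℂ} {a : Option ℂ} {r₀ c r θ b : ℝ}
    (hf : ContinuousOn f (negAxisSector r₀ c)) (hc : 0 < c) (hr : r₀ < r) (hθ : |θ - π| ≤ c)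
    (hb : ∀ ψ : ℝ, |ψ - π| < c → sphChordal a (some (f (r * exp (ψ * I)))) ≤ b) :
    sphChordal a (some (f (r * exp (θ * I)))) ≤ b := by
  have harc : (fun ψ : ℝ => (r : ℂ) * exp (ψ * I)) '' {ψ | |ψ - π| < c} ⊆
      negAxisSector r₀ c := by
    rintro _ ⟨ψ, hψ, rfl⟩
    exact ⟨r, ψ, hr, hψ.le, rfl⟩
  refine ContinuousWithinAt.closure_le (f := fun z => sphChordal a (some (f z)))
    (mem_closure_image_arc hc r hθ) ?_ continuousWithinAt_const ?_
  · exact (continuous_sphChordal_some a).continuousAt.comp_continuousWithinAt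
      ((hf _ ⟨r, θ, hr, hθ, rfl⟩).mono harc)
  · rintro _ ⟨ψ, hψ, rfl⟩
    exact hb ψ hψ

theorem limit_in_sector_of_exponential_spherical_decay
    (ε r₀ k : ℝ) (hε : 0 < ε) (hε' : ε < π / 2) (hr₀ : 0 < r₀) (hk : 0 < k)
    (A : Set ℂ)
    (hA : A = {z : ℂ | ∃ r θ : ℝ, r > r₀ ∧ |θ - π| ≤ π / 2 - ε ∧
      z = (r : ℂ) * Complex.exp (θ * Complex.I)})
    (f : ℂ → ℂ) (hf : DifferentiableOn ℂ f A)
    (hdecay : ∀ z ∈ A,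
      ‖deriv f z‖ / (1 + ‖f z‖ ^ 2) ≤
        (1 / 2) * Real.exp (-k * ‖z‖)) :
    ∃ a : Option ℂ, ∀ z ∈ A, sphChordal a (some (f z)) ≤ (1 / k) * Real.exp (-k * r₀) := by
  have hc : 0 < π / 2 - ε := by linarith
  have hcπ : π / 2 - ε ≤ π := by linarith [pi_pos]
  change A = negAxisSector r₀ (π / 2 - ε) at hA
  subst hA
  have hsector := sphericalDecayOnSector_of_differentiableOn hr₀.le hcπ hf hdecay
  obtain ⟨a, ha⟩ := hsector.exists_sphChordal_le hk hc hr₀.le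
  refine ⟨a, ?_⟩
  rintro _ ⟨r, θ, hr, hθ, rfl⟩
  calc sphChordal a (some (f (r * exp (θ * I)))) ≤ Real.exp (-k * r) / k :=
        hf.continuousOn.sphChordal_polar_le hc hr hθ fun ψ hψ => ha r ψ hr hψ
    _ ≤ 1 / k * Real.exp (-k * r₀) := by
        rw [div_eq_inv_mul, one_div]
        exact mul_le_mul_of_nonneg_left (Real.exp_le_exp.2 (by nlinarith)) (inv_nonneg.2 hk.le)
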